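/- arXiv:quant-ph/0502165 — 2 statements merged into one kernel-verified Lean document; each statement's English description precedes it below -/
import Mathlib

section
/- Let A be an n×n complex matrix and let V be a unitary matrix satisfying the polar decomposition A = |A|·V, where |A| = √(A·A†). Then for every unitary matrix U one has |Tr(A·U)| ≤ Tr(|A|), and equality is attained at U = V†, i.e. Tr(A·V†) = Tr(|A|). Consequently the maximum of |Tr(A·U)| over all unitary U equals Tr(|A|). -/
/-!
Diagonalize the positive semidefinite factor, `P = U D U†`. Then
`Tr(P W) = ∑ dᵢ (U† W U)ᵢᵢ`, and the diagonal entries of the unitary `U† W U` have norm at most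
`1`, so `|Tr(P W)| ≤ ∑ dᵢ = Tr P` for every unitary `W`. With `A = |A| V` this gives
`|Tr(A U)| = |Tr(|A| (V U))| ≤ Tr |A|`, while `A V† = |A|` attains the bound.
-/

open Matrix
open scoped ComplexOrder

/-- The positive semidefinite square root of a matrix (zero if the matrix is not
positive semidefinite). -/
noncomputable def msqrt {n : ℕ} (A : Matrix (Fin n) (Fin n) ℂ) : Matrix (Fin n) (Fin n) ℂ :=
  open scoped Classical in
  if h : A.PosSemidef then
    (h.1.eigenvectorUnitary : Matrix (Fin n) (Fin n) ℂ) *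
      diagonal ((↑) ∘ (√·) ∘ h.1.eigenvalues) *
      (star h.1.eigenvectorUnitary : Matrix (Fin n) (Fin n) ℂ)
  else 0

theorem Matrix.PosSemidef.norm_trace_mul_unitary_le {𝕜 ι : Type*} [RCLike 𝕜] [Fintype ι]
    [DecidableEq ι] {P W : Matrix ι ι 𝕜} (hP : P.PosSemidef) (hW : W ∈ unitaryGroup ι 𝕜) :
    ‖(P * W).trace‖ ≤ RCLike.re P.trace := by
  set U : Matrix ι ι 𝕜 := ↑hP.1.eigenvectorUnitary
  set d := hP.1.eigenvalues
  have hW' : star U * W * U ∈ unitaryGroup ι 𝕜 :=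
    mul_mem (mul_mem (star hP.1.eigenvectorUnitary).2 hW) hP.1.eigenvectorUnitary.2
  have htrace : (P * W).trace = ∑ i, (d i : 𝕜) * (star U * W * U) i i := by
    conv_lhs => rw [hP.1.spectral_theorem, Unitary.conjStarAlgAut_apply]
    rw [mul_assoc, mul_assoc, trace_mul_comm, mul_assoc]
    simp only [trace, mul_assoc, diag_apply, diagonal_mul, Function.comp_apply, d, U]
  calc ‖(P * W).trace‖ ≤ ∑ i, d i * ‖(star U * W * U) i i‖ := by
        rw [htrace]
        refine (norm_sum_le _ _).trans_eq (Finset.sum_congr rfl fun i _ => ?_)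
        rw [norm_mul, RCLike.norm_of_nonneg (hP.eigenvalues_nonneg i)]
    _ ≤ ∑ i, d i := Finset.sum_le_sum fun i _ =>
        mul_le_of_le_one_right (hP.eigenvalues_nonneg i) (entry_norm_bound_of_unitary hW' i i)
    _ = RCLike.re P.trace := by
        simp only [hP.1.trace_eq_sum_eigenvalues, map_sum, RCLike.ofReal_re, d]

theorem posSemidef_msqrt {n : ℕ} {P : Matrix (Fin n) (Fin n) ℂ} (hP : P.PosSemidef) :
    (msqrt P).PosSemidef := by
  rw [msqrt, dif_pos hP, star_eq_conjTranspose]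
  refine PosSemidef.mul_mul_conjTranspose_same (posSemidef_diagonal_iff.mpr fun i => ?_) _
  exact Complex.zero_le_real.mpr (Real.sqrt_nonneg _)

/-- **Lemma 1.** For any matrix `A` with polar decomposition `A = |A|·V`
(`|A| = √(A·A†)`, `V` unitary), `|Tr(A·U)| ≤ Tr(|A|)` for every unitary `U`,
with equality at `U = V†`; hence `Tr(|A|)` is the maximum of `|Tr(A·U)|` over
all unitary `U`. -/
theorem max_abs_trace_unitary {n : ℕ}
    (A V : Matrix (Fin n) (Fin n) ℂ)
    (hV : Vᴴ * V = 1) (hV' : V * Vᴴ = 1)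
    (hpolar : A = msqrt (A * Aᴴ) * V) :
    (∀ U : Matrix (Fin n) (Fin n) ℂ, Uᴴ * U = 1 → U * Uᴴ = 1 →
        ‖(A * U).trace‖ ≤ (msqrt (A * Aᴴ)).trace.re) ∧
      (A * Vᴴ).trace = (msqrt (A * Aᴴ)).trace ∧
      IsGreatest {x : ℝ | ∃ U : Matrix (Fin n) (Fin n) ℂ,
          Uᴴ * U = 1 ∧ U * Uᴴ = 1 ∧ x = ‖(A * U).trace‖}
        ((msqrt (A * Aᴴ)).trace.re) := by
  set S := msqrt (A * Aᴴ)
  have hS : S.PosSemidef := posSemidef_msqrt (posSemidef_self_mul_conjTranspose A)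
  have hV_mem : V ∈ unitaryGroup (Fin n) ℂ := mem_unitaryGroup_iff.mpr hV'
  have bound : ∀ U : Matrix (Fin n) (Fin n) ℂ, Uᴴ * U = 1 → U * Uᴴ = 1 →
      ‖(A * U).trace‖ ≤ S.trace.re := fun U _ hU' => by
    rw [hpolar, mul_assoc]
    exact hS.norm_trace_mul_unitary_le (mul_mem hV_mem (mem_unitaryGroup_iff.mpr hU'))
  have hAV : A * Vᴴ = S := by rw [hpolar, mul_assoc, hV', mul_one]
  have hnorm : ‖S.trace‖ = S.trace.re := by
    simpa using congrArg Complex.re (Complex.norm_of_nonneg' hS.trace_nonneg)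
  refine ⟨bound, congrArg trace hAV, ⟨Vᴴ, ?_, ?_, by rw [hAV, hnorm]⟩, ?_⟩
  · rwa [conjTranspose_conjTranspose]
  · rwa [conjTranspose_conjTranspose]
  · rintro _ ⟨U, hU, hU', rfl⟩
    exact bound U hU hU'
end

section
/- Let ρ0 and ρ1 be n×n complex density matrices with rank(ρ0) + rank(ρ1) = rank(ρ0 + ρ1) = n, set Σ = ρ0 + ρ1, F0 = √(√ρ0 · ρ1 · √ρ0), F1 = √(√ρ1 · ρ0 · √ρ1), and let V be a unitary matrix with √ρ0 · √ρ1 = F0 · V. Let α > 0 be a real number such that ρ0 − α·F0 and ρ1 − (1/α)·F1 are positive semidefinite. Define E0 = Σ⁻¹·√ρ0·(ρ0 − α·F0)·√ρ0·Σ⁻¹, E1 = Σ⁻¹·√ρ1·(ρ1 − (1/α)·F1)·√ρ1·Σ⁻¹, and E? = Σ⁻¹·(√α·√ρ0 + (1/√α)·√ρ1·V†)·F0·(√α·√ρ0 + (1/√α)·V·√ρ1)·Σ⁻¹. Then E0, E1, E? are positive semidefinite, E0 + E1 + E? = 1, and Tr(E0 ρ1) = 0 = Tr(E1 ρ0); that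 is, (E0, E1, E?) is a USD POVM for (ρ0, ρ1). -/
/-!
Since `rank ρ0 + rank ρ1 = rank Σ`, the ranges of `ρ0` and `ρ1` meet only in `0`. The matrix
`ρ0 Σ⁻¹ ρ1 = ρ0 - ρ0 Σ⁻¹ ρ0 = ρ1 Σ⁻¹ ρ0` lies in both ranges, so it vanishes, and taking square
roots gives `√ρ0 Σ⁻¹ ρ1 = 0 = √ρ1 Σ⁻¹ ρ0`: this is unambiguity. Each `E` has the form
`Σ⁻¹ L M Lᴴ Σ⁻¹` with `M ≥ 0`, hence is positive. Finally the polar decomposition gives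
`F0 V = √ρ0 √ρ1` and `V† F0 V = F1`, and with these the three numerators add up to `Σ²`.
-/

open Matrix
open scoped ComplexOrder

namespace Matrix

lemma mul_inv_add_mul_comm {m R : Type*} [Fintype m] [DecidableEq m] [CommRing R]
    {P Q : Matrix m m R} (h : IsUnit (P + Q).det) :
    P * (P + Q)⁻¹ * Q = Q * (P + Q)⁻¹ * P := by
  have hPQ : P * (P + Q)⁻¹ * Q = P * (P + Q)⁻¹ * (P + Q) - P * (P + Q)⁻¹ * P := by
    rw [Matrix.mul_add]; abel
  have hQP : Q * (P + Q)⁻¹ * P = (P + Q) * (P + Q)⁻¹ * P - P * (P + Q)⁻¹ * P := by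
    simp only [Matrix.add_mul]; abel
  rw [hPQ, hQP, Matrix.mul_assoc, nonsing_inv_mul _ h, mul_nonsing_inv _ h, Matrix.mul_one,
    Matrix.one_mul]

section Field

variable {m K : Type*} [Fintype m] [Field K]

lemma isUnit_det_of_rank_eq_card [DecidableEq m] {S : Matrix m m K}
    (h : S.rank = Fintype.card m) : IsUnit S.det := by
  rw [← isUnit_iff_isUnit_det, ← mulVec_surjective_iff_isUnit]
  refine (LinearMap.range_eq_top (f := S.mulVecLin)).1 (Submodule.eq_top_of_finrank_eq ?_)
  rw [Module.finrank_fintype_fun_eq_card]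
  exact h

lemma range_inf_range_eq_bot_of_rank_add {l : Type*} {P Q : Matrix l m K}
    (h : P.rank + Q.rank = (P + Q).rank) :
    LinearMap.range P.mulVecLin ⊓ LinearMap.range Q.mulVecLin = ⊥ := by
  have hsum : (P + Q).rank ≤ Module.finrank K ↥(LinearMap.range P.mulVecLin ⊔
      LinearMap.range Q.mulVecLin) := by
    rw [rank, Matrix.mulVecLin_add]
    exact Submodule.finrank_mono (LinearMap.range_add_le _ _)
  have hdim := Submodule.finrank_sup_add_finrank_inf_eq
    (LinearMap.range P.mulVecLin) (LinearMap.range Q.mulVecLin)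
  rw [← rank, ← rank] at hdim
  exact Submodule.finrank_eq_zero.1 (by omega)

/-- By `mul_inv_add_mul_comm`, the range lies in `range P ⊓ range Q = ⊥`. -/
lemma mul_inv_add_mul_eq_zero_of_rank_add [DecidableEq m] {P Q : Matrix m m K}
    (hrank : P.rank + Q.rank = (P + Q).rank) (h : IsUnit (P + Q).det) :
    P * (P + Q)⁻¹ * Q = 0 := by
  have hP : LinearMap.range (P * (P + Q)⁻¹ * Q).mulVecLin ≤ LinearMap.range P.mulVecLin := by
    rw [Matrix.mul_assoc, mulVecLin_mul]
    exact LinearMap.range_comp_le_range _ _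
  have hQ : LinearMap.range (P * (P + Q)⁻¹ * Q).mulVecLin ≤ LinearMap.range Q.mulVecLin := by
    rw [mul_inv_add_mul_comm h, Matrix.mul_assoc, mulVecLin_mul]
    exact LinearMap.range_comp_le_range _ _
  have hbot := range_inf_range_eq_bot_of_rank_add hrank ▸ le_inf hP hQ
  rw [le_bot_iff, LinearMap.range_eq_bot, ← toLin'_apply'] at hbot
  exact Matrix.toLin'.map_eq_zero_iff.1 hbot

lemma usd_numerators_sum_eq_add_mul_self {ρ0 ρ1 A B F0 F1 V W : Matrix m m K} {a c : K}
    (hc : c ≠ 0) (hca : c * c = a) (hA : A * A = ρ0) (hB : B * B = ρ1)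
    (hFV : F0 * V = A * B) (hWF : W * F0 = B * A) (hF1 : W * F0 * V = F1) :
    A * (ρ0 - a • F0) * A + B * (ρ1 - a⁻¹ • F1) * B +
      (c • A + c⁻¹ • (B * W)) * F0 * (c • A + c⁻¹ • (V * B)) = (ρ0 + ρ1) * (ρ0 + ρ1) := by
  have hcross : (c • A + c⁻¹ • (B * W)) * F0 * (c • A + c⁻¹ • (V * B)) =
      a • (A * F0 * A) + ρ0 * ρ1 + ρ1 * ρ0 + a⁻¹ • (B * F1 * B) := by
    have hcd : c * c⁻¹ = 1 := mul_inv_cancel₀ hc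
    have hdc : c⁻¹ * c = 1 := inv_mul_cancel₀ hc
    have hdd : c⁻¹ * c⁻¹ = a⁻¹ := by rw [← mul_inv, hca]
    have hAFVB : A * F0 * (V * B) = ρ0 * ρ1 := by
      rw [← hA, ← hB, ← Matrix.mul_assoc, Matrix.mul_assoc A F0, hFV]
      simp only [Matrix.mul_assoc]
    have hBWFA : B * W * F0 * A = ρ1 * ρ0 := by
      rw [← hA, ← hB, Matrix.mul_assoc B W, hWF]
      simp only [Matrix.mul_assoc]
    have hBWFVB : B * W * F0 * (V * B) = B * F1 * B := by
      rw [← hF1]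
      simp only [Matrix.mul_assoc]
    simp only [Matrix.add_mul, Matrix.mul_add, smul_mul_assoc, mul_smul_comm, smul_add, smul_smul]
    rw [hca, hcd, hdc, hdd, one_smul, one_smul, hAFVB, hBWFA, hBWFVB]
    abel
  rw [hcross, ← hA, ← hB]
  simp only [Matrix.mul_sub, Matrix.sub_mul, Matrix.add_mul, Matrix.mul_add, mul_smul_comm,
    smul_mul_assoc, Matrix.mul_assoc]
  abel

lemma usd_povm_sum_eq_one [DecidableEq m] {ρ0 ρ1 A B F0 F1 V W : Matrix m m K}
    {a c : K} (hS : IsUnit (ρ0 + ρ1).det) (hc : c ≠ 0) (hca : c * c = a) (hA : A * A = ρ0)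
    (hB : B * B = ρ1) (hFV : F0 * V = A * B) (hWF : W * F0 = B * A) (hF1 : W * F0 * V = F1) :
    (ρ0 + ρ1)⁻¹ * A * (ρ0 - a • F0) * A * (ρ0 + ρ1)⁻¹ +
      (ρ0 + ρ1)⁻¹ * B * (ρ1 - a⁻¹ • F1) * B * (ρ0 + ρ1)⁻¹ +
      (ρ0 + ρ1)⁻¹ * (c • A + c⁻¹ • (B * W)) * F0 * (c • A + c⁻¹ • (V * B)) * (ρ0 + ρ1)⁻¹
      = 1 := by
  calc _ = (ρ0 + ρ1)⁻¹ * (A * (ρ0 - a • F0) * A + B * (ρ1 - a⁻¹ • F1) * B +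
        (c • A + c⁻¹ • (B * W)) * F0 * (c • A + c⁻¹ • (V * B))) * (ρ0 + ρ1)⁻¹ := by
        simp only [Matrix.mul_add, Matrix.add_mul, Matrix.mul_assoc]
    _ = ((ρ0 + ρ1)⁻¹ * (ρ0 + ρ1)) * ((ρ0 + ρ1) * (ρ0 + ρ1)⁻¹) := by
        rw [usd_numerators_sum_eq_add_mul_self hc hca hA hB hFV hWF hF1]
        simp only [Matrix.mul_assoc]
    _ = 1 := by rw [nonsing_inv_mul _ hS, mul_nonsing_inv _ hS, Matrix.one_mul]

end Field

section RCLike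

variable {m 𝕜 : Type*} [Fintype m] [RCLike 𝕜]

lemma conjTranspose_mul_eq_mul_of_mul_eq {A B F V : Matrix m m 𝕜} (hA : Aᴴ = A) (hB : Bᴴ = B)
    (hF : Fᴴ = F) (h : F * V = A * B) : Vᴴ * F = B * A := by
  simpa only [conjTranspose_mul, hA, hB, hF] using congrArg conjTranspose h

lemma PosSemidef.mul_mul_mul_mul_of_conjTranspose_eq {M X L L' : Matrix m m 𝕜}
    (hM : M.PosSemidef) (hX : Xᴴ = X) (hL : Lᴴ = L') : (X * L * M * L' * X).PosSemidef := by
  simpa only [conjTranspose_mul, hX, hL, Matrix.mul_assoc] using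
    hM.mul_mul_conjTranspose_same (X * L)

end RCLike

end Matrix

section msqrt

variable {n : ℕ} {ρ0 ρ1 : Matrix (Fin n) (Fin n) ℂ}

open scoped MatrixOrder in
lemma msqrt_eq_cfcSqrt (hρ : ρ0.PosSemidef) : msqrt ρ0 = CFC.sqrt ρ0 := by
  rw [msqrt, dif_pos hρ, CFC.sqrt_eq_cfc, cfc_nnreal_eq_real _ ρ0 hρ.nonneg, hρ.1.cfc_eq]
  simp only [IsHermitian.cfc, Unitary.conjStarAlgAut_apply]
  congr!
  rw [Real.sqrt]

open scoped MatrixOrder in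
lemma posSemidef_msqrt_s13 (hρ : ρ0.PosSemidef) : (msqrt ρ0).PosSemidef := by
  rw [msqrt_eq_cfcSqrt hρ]
  exact (CFC.sqrt_nonneg ρ0).posSemidef

open scoped MatrixOrder in
lemma msqrt_mul_msqrt (hρ : ρ0.PosSemidef) : msqrt ρ0 * msqrt ρ0 = ρ0 := by
  rw [msqrt_eq_cfcSqrt hρ]
  exact CFC.sqrt_mul_sqrt_self ρ0 hρ.nonneg

open scoped MatrixOrder in
lemma eq_msqrt_of_mul_self_eq {A : Matrix (Fin n) (Fin n) ℂ} (hρ : ρ0.PosSemidef)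
    (hA : A.PosSemidef) (h : A * A = ρ0) : A = msqrt ρ0 := by
  rw [msqrt_eq_cfcSqrt hρ]
  exact (CFC.sqrt_unique h hA.nonneg).symm

lemma posSemidef_msqrt_mul_mul_msqrt (hρ0 : ρ0.PosSemidef) (hρ1 : ρ1.PosSemidef) :
    (msqrt ρ0 * ρ1 * msqrt ρ0).PosSemidef := by
  simpa only [(posSemidef_msqrt_s13 hρ0).1.eq] using hρ1.mul_mul_conjTranspose_same (msqrt ρ0)

lemma msqrt_mul_inv_add_mul_eq_zero (hρ0 : ρ0.PosSemidef)
    (hrank : ρ0.rank + ρ1.rank = (ρ0 + ρ1).rank) (hS : IsUnit (ρ0 + ρ1).det) :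
    msqrt ρ0 * ((ρ0 + ρ1)⁻¹ * ρ1) = 0 := by
  refine (conjTranspose_mul_self_mul_eq_zero _ _).1 ?_
  rw [(posSemidef_msqrt_s13 hρ0).1.eq, msqrt_mul_msqrt hρ0, ← Matrix.mul_assoc]
  exact mul_inv_add_mul_eq_zero_of_rank_add hrank hS

/-- Both sides are positive square roots of `√ρ1 ρ0 √ρ1 = (√ρ0 √ρ1)ᴴ (√ρ0 √ρ1)`. -/
lemma conjTranspose_mul_msqrt_mul_eq_msqrt {V : Matrix (Fin n) (Fin n) ℂ}
    (hρ0 : ρ0.PosSemidef) (hρ1 : ρ1.PosSemidef) (hV : V * Vᴴ = 1)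
    (hpolar : msqrt ρ0 * msqrt ρ1 = msqrt (msqrt ρ0 * ρ1 * msqrt ρ0) * V) :
    Vᴴ * msqrt (msqrt ρ0 * ρ1 * msqrt ρ0) * V = msqrt (msqrt ρ1 * ρ0 * msqrt ρ1) := by
  set F := msqrt (msqrt ρ0 * ρ1 * msqrt ρ0)
  have hF : F.PosSemidef := posSemidef_msqrt_s13 (posSemidef_msqrt_mul_mul_msqrt hρ0 hρ1)
  have hVF : Vᴴ * F = msqrt ρ1 * msqrt ρ0 :=
    conjTranspose_mul_eq_mul_of_mul_eq (posSemidef_msqrt_s13 hρ0).1.eq (posSemidef_msqrt_s13 hρ1).1.eq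
      hF.1.eq hpolar.symm
  refine eq_msqrt_of_mul_self_eq (posSemidef_msqrt_mul_mul_msqrt hρ1 hρ0) ?_ ?_
  · simpa only [conjTranspose_conjTranspose] using hF.mul_mul_conjTranspose_same Vᴴ
  · calc Vᴴ * F * V * (Vᴴ * F * V) = (Vᴴ * F) * (V * Vᴴ) * (F * V) := by
          simp only [Matrix.mul_assoc]
      _ = msqrt ρ1 * (msqrt ρ0 * msqrt ρ0) * msqrt ρ1 := by
          rw [hVF, hV, ← hpolar]; simp only [Matrix.mul_one, Matrix.mul_assoc]
      _ = msqrt ρ1 * ρ0 * msqrt ρ1 := by rw [msqrt_mul_msqrt hρ0]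

end msqrt

theorem optimal_povm_is_usd_povm_general {n : ℕ}
    (ρ0 ρ1 V E0 E1 Eq : Matrix (Fin n) (Fin n) ℂ)
    (hρ0 : ρ0.PosSemidef)
    (hρ1 : ρ1.PosSemidef)
    (hrank : ρ0.rank + ρ1.rank = (ρ0 + ρ1).rank)
    (hfull : (ρ0 + ρ1).rank = n)
    (hV' : V * Vᴴ = 1)
    (hpolar : msqrt ρ0 * msqrt ρ1 = msqrt (msqrt ρ0 * ρ1 * msqrt ρ0) * V)
    (α : ℝ) (hα : 0 < α)
    (hpos0 : (ρ0 - (α : ℂ) • msqrt (msqrt ρ0 * ρ1 * msqrt ρ0)).PosSemidef)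
    (hpos1 : (ρ1 - (α : ℂ)⁻¹ • msqrt (msqrt ρ1 * ρ0 * msqrt ρ1)).PosSemidef)
    (hE0 : E0 = (ρ0 + ρ1)⁻¹ * msqrt ρ0 *
      (ρ0 - (α : ℂ) • msqrt (msqrt ρ0 * ρ1 * msqrt ρ0)) * msqrt ρ0 * (ρ0 + ρ1)⁻¹)
    (hE1 : E1 = (ρ0 + ρ1)⁻¹ * msqrt ρ1 *
      (ρ1 - (α : ℂ)⁻¹ • msqrt (msqrt ρ1 * ρ0 * msqrt ρ1)) * msqrt ρ1 * (ρ0 + ρ1)⁻¹)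
    (hEq : Eq = (ρ0 + ρ1)⁻¹ *
      ((Real.sqrt α : ℂ) • msqrt ρ0 + (Real.sqrt α : ℂ)⁻¹ • (msqrt ρ1 * Vᴴ)) *
      msqrt (msqrt ρ0 * ρ1 * msqrt ρ0) *
      ((Real.sqrt α : ℂ) • msqrt ρ0 + (Real.sqrt α : ℂ)⁻¹ • (V * msqrt ρ1)) *
      (ρ0 + ρ1)⁻¹) :
    E0.PosSemidef ∧ E1.PosSemidef ∧ Eq.PosSemidef ∧
      E0 + E1 + Eq = 1 ∧
      (E0 * ρ1).trace = 0 ∧ (E1 * ρ0).trace = 0 := by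
  subst hE0 hE1 hEq
  have hS : IsUnit (ρ0 + ρ1).det := isUnit_det_of_rank_eq_card (by rwa [Fintype.card_fin])
  have hSinv : ((ρ0 + ρ1)⁻¹)ᴴ = (ρ0 + ρ1)⁻¹ := (hρ0.add hρ1).1.inv.eq
  have hA : (msqrt ρ0)ᴴ = msqrt ρ0 := (posSemidef_msqrt_s13 hρ0).1.eq
  have hB : (msqrt ρ1)ᴴ = msqrt ρ1 := (posSemidef_msqrt_s13 hρ1).1.eq
  have hF0 := posSemidef_msqrt_s13 (posSemidef_msqrt_mul_mul_msqrt hρ0 hρ1)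
  have hperp0 := msqrt_mul_inv_add_mul_eq_zero hρ0 hrank hS
  have hperp1 : msqrt ρ1 * ((ρ0 + ρ1)⁻¹ * ρ0) = 0 := by
    have h := msqrt_mul_inv_add_mul_eq_zero hρ1 (by rwa [add_comm, add_comm ρ1])
      (add_comm ρ0 ρ1 ▸ hS)
    rwa [add_comm ρ1] at h
  have hc : (Real.sqrt α : ℂ) * Real.sqrt α = α := by
    rw [← Complex.ofReal_mul, Real.mul_self_sqrt hα.le]
  refine ⟨hpos0.mul_mul_mul_mul_of_conjTranspose_eq hSinv hA,
    hpos1.mul_mul_mul_mul_of_conjTranspose_eq hSinv hB,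
    hF0.mul_mul_mul_mul_of_conjTranspose_eq hSinv (by simp [hA, hB]),
    usd_povm_sum_eq_one hS (by exact_mod_cast (Real.sqrt_pos.2 hα).ne') hc
      (msqrt_mul_msqrt hρ0) (msqrt_mul_msqrt hρ1) hpolar.symm
      (conjTranspose_mul_eq_mul_of_mul_eq hA hB hF0.1.eq hpolar.symm)
      (conjTranspose_mul_msqrt_mul_eq_msqrt hρ0 hρ1 hV' hpolar),
    by simp [Matrix.mul_assoc, hperp0], by simp [Matrix.mul_assoc, hperp1]⟩

/-- **Theorem 4 (POVM validity).** Under the positivity conditions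
`ρ0 − α·F0 ≥ 0` and `ρ1 − (1/α)·F1 ≥ 0`, the constructed operators
`E0, E1, E?` form a valid USD POVM for `(ρ0, ρ1)`. -/
theorem optimal_povm_is_usd_povm {n : ℕ}
    (ρ0 ρ1 V E0 E1 Eq : Matrix (Fin n) (Fin n) ℂ)
    (hρ0 : ρ0.PosSemidef) (hρ0tr : ρ0.trace = 1)
    (hρ1 : ρ1.PosSemidef) (hρ1tr : ρ1.trace = 1)
    (hrank : ρ0.rank + ρ1.rank = (ρ0 + ρ1).rank)
    (hfull : (ρ0 + ρ1).rank = n)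
    (hV : Vᴴ * V = 1) (hV' : V * Vᴴ = 1)
    (hpolar : msqrt ρ0 * msqrt ρ1 = msqrt (msqrt ρ0 * ρ1 * msqrt ρ0) * V)
    (α : ℝ) (hα : 0 < α)
    (hpos0 : (ρ0 - (α : ℂ) • msqrt (msqrt ρ0 * ρ1 * msqrt ρ0)).PosSemidef)
    (hpos1 : (ρ1 - (α : ℂ)⁻¹ • msqrt (msqrt ρ1 * ρ0 * msqrt ρ1)).PosSemidef)
    (hE0 : E0 = (ρ0 + ρ1)⁻¹ * msqrt ρ0 *
      (ρ0 - (α : ℂ) • msqrt (msqrt ρ0 * ρ1 * msqrt ρ0)) * msqrt ρ0 * (ρ0 + ρ1)⁻¹)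
    (hE1 : E1 = (ρ0 + ρ1)⁻¹ * msqrt ρ1 *
      (ρ1 - (α : ℂ)⁻¹ • msqrt (msqrt ρ1 * ρ0 * msqrt ρ1)) * msqrt ρ1 * (ρ0 + ρ1)⁻¹)
    (hEq : Eq = (ρ0 + ρ1)⁻¹ *
      ((Real.sqrt α : ℂ) • msqrt ρ0 + (Real.sqrt α : ℂ)⁻¹ • (msqrt ρ1 * Vᴴ)) *
      msqrt (msqrt ρ0 * ρ1 * msqrt ρ0) *
      ((Real.sqrt α : ℂ) • msqrt ρ0 + (Real.sqrt α : ℂ)⁻¹ • (V * msqrt ρ1)) *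
      (ρ0 + ρ1)⁻¹) :
    E0.PosSemidef ∧ E1.PosSemidef ∧ Eq.PosSemidef ∧
      E0 + E1 + Eq = 1 ∧
      (E0 * ρ1).trace = 0 ∧ (E1 * ρ0).trace = 0 :=
  optimal_povm_is_usd_povm_general ρ0 ρ1 V E0 E1 Eq hρ0 hρ1 hrank hfull hV' hpolar α hα hpos0 hpos1
    hE0 hE1 hEq
end
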